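/- Let j be odd and let x ⊆ ⟦n⟧_{j+1}, x̄, x̂ ⊆ ⟦n⟧_{j+2}. If x̄⊖ ∪ x⊙ ∪ x̂⊕ is well-formed, then x, x̄, and x̂ are each well-formed. -/
import Mathlib


/-- The three symbols `⊖`, `⊙`, `⊕`. -/
inductive CSym : Type
  | minus : CSym
  | mid : CSym
  | plus : CSym
deriving DecidableEq

/-- `Str n j` is `⟦n⟧_j`: strings of length `n` over `{⊖,⊙,⊕}` with exactly `j`
occurrences of `⊙`. -/
def Str (n j : ℕ) : Type := {l : List CSym // l.length = n ∧ l.count CSym.mid = j}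

/-- The even faces `a⁺` of `a ∈ ⟦n⟧_{j+1}`: replace the `i`-th occurrence of `⊙`
by `⊕` if `i` is odd (i.e. the number of earlier `⊙`'s is even), and by `⊖` if
`i` is even. -/
def posF {n j : ℕ} (a : Str n (j+1)) : Set (Str n j) :=
  {b | ∃ (q : ℕ) (h : q < a.1.length), a.1.get ⟨q, h⟩ = CSym.mid ∧
    b.1 = a.1.set q (if Even ((a.1.take q).count CSym.mid) then CSym.plus else CSym.minus)}

/-- The odd faces `a⁻` of `a ∈ ⟦n⟧_{j+1}`: replace the `i`-th occurrence of `⊙`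
by `⊖` if `i` is odd, and by `⊕` if `i` is even. -/
def negF {n j : ℕ} (a : Str n (j+1)) : Set (Str n j) :=
  {b | ∃ (q : ℕ) (h : q < a.1.length), a.1.get ⟨q, h⟩ = CSym.mid ∧
    b.1 = a.1.set q (if Even ((a.1.take q).count CSym.mid) then CSym.minus else CSym.plus)}

def sPos {n j : ℕ} (ξ : Set (Str n (j+1))) : Set (Str n j) := ⋃ a ∈ ξ, posF a
def sNeg {n j : ℕ} (ξ : Set (Str n (j+1))) : Set (Str n j) := ⋃ a ∈ ξ, negF a

/-- Append `⊖` to a string. -/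
def appM {n j : ℕ} (a : Str n j) : Str (n+1) j :=
  ⟨a.1 ++ [CSym.minus], by
    refine ⟨by simp [a.2.1], ?_⟩
    simp [List.count_append, a.2.2, List.count_singleton]⟩

/-- Append `⊕` to a string. -/
def appP {n j : ℕ} (a : Str n j) : Str (n+1) j :=
  ⟨a.1 ++ [CSym.plus], by
    refine ⟨by simp [a.2.1], ?_⟩
    simp [List.count_append, a.2.2, List.count_singleton]⟩

/-- Append `⊙` to a string. -/
def appO {n j : ℕ} (a : Str n j) : Str (n+1) (j+1) :=
  ⟨a.1 ++ [CSym.mid], by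
    refine ⟨by simp [a.2.1], ?_⟩
    simp [List.count_append, a.2.2, List.count_singleton]⟩

/-- A subset of `⟦n⟧_{j+1}` is well-formed if distinct elements share no even
face and no odd face. -/
def WfC {n j : ℕ} (ξ : Set (Str n (j+1))) : Prop :=
  ∀ a ∈ ξ, ∀ b ∈ ξ, a ≠ b → posF a ∩ posF b = ∅ ∧ negF a ∩ negF b = ∅

/-- `ξ` moves `μ` to `π`. -/
def MovesC {n j : ℕ} (ξ : Set (Str n (j+1))) (μ π : Set (Str n j)) : Prop :=
  π = (μ ∪ sPos ξ) \ sNeg ξ ∧ μ = (π ∪ sNeg ξ) \ sPos ξ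


/-- Appending a symbol preserves the face relation at the list level. -/
lemma face_append_list (u v s : CSym) (la lc : List CSym)
    (h : ∃ (q : ℕ) (hq : q < la.length), la.get ⟨q, hq⟩ = CSym.mid ∧
      lc = la.set q (if Even ((la.take q).count CSym.mid) then u else v)) :
    ∃ (q : ℕ) (hq : q < (la ++ [s]).length), (la ++ [s]).get ⟨q, hq⟩ = CSym.mid ∧
      lc ++ [s] = (la ++ [s]).set q
        (if Even (((la ++ [s]).take q).count CSym.mid) then u else v) := by
  obtain ⟨q, hq, hm, he⟩ := h
  refine ⟨q, by simp; omega, ?_, ?_⟩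
  · simpa [List.getElem_append_left hq] using hm
  · rw [List.take_append_of_le_length (le_of_lt hq),
      List.set_append_left _ _ hq, he]

lemma posF_appO {n j : ℕ} (a : Str n (j+1)) (c : Str n j) (hc : c ∈ posF a) :
    appO c ∈ posF (appO a) := face_append_list _ _ _ _ _ hc

lemma negF_appO {n j : ℕ} (a : Str n (j+1)) (c : Str n j) (hc : c ∈ negF a) :
    appO c ∈ negF (appO a) := face_append_list _ _ _ _ _ hc

lemma posF_appM {n j : ℕ} (a : Str n (j+1)) (c : Str n j) (hc : c ∈ posF a) :
    appM c ∈ posF (appM a) := face_append_list _ _ _ _ _ hc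

lemma negF_appM {n j : ℕ} (a : Str n (j+1)) (c : Str n j) (hc : c ∈ negF a) :
    appM c ∈ negF (appM a) := face_append_list _ _ _ _ _ hc

lemma posF_appP {n j : ℕ} (a : Str n (j+1)) (c : Str n j) (hc : c ∈ posF a) :
    appP c ∈ posF (appP a) := face_append_list _ _ _ _ _ hc

lemma negF_appP {n j : ℕ} (a : Str n (j+1)) (c : Str n j) (hc : c ∈ negF a) :
    appP c ∈ negF (appP a) := face_append_list _ _ _ _ _ hc

lemma appO_inj {n j : ℕ} : Function.Injective (@appO n j) := by
  intro a b hab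
  exact Subtype.ext (List.append_cancel_right (congrArg Subtype.val hab))

lemma appM_inj {n j : ℕ} : Function.Injective (@appM n j) := by
  intro a b hab
  exact Subtype.ext (List.append_cancel_right (congrArg Subtype.val hab))

lemma appP_inj {n j : ℕ} : Function.Injective (@appP n j) := by
  intro a b hab
  exact Subtype.ext (List.append_cancel_right (congrArg Subtype.val hab))

lemma wf_of_image {n j m k : ℕ} {ξ : Set (Str n (j+1))} {Ξ : Set (Str m (k+1))}
    (f : Str n (j+1) → Str m (k+1)) (g : Str n j → Str m k)
    (hf : Function.Injective f) (hsub : ∀ a ∈ ξ, f a ∈ Ξ)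
    (hpos : ∀ (a : Str n (j+1)) (c : Str n j), c ∈ posF a → g c ∈ posF (f a))
    (hneg : ∀ (a : Str n (j+1)) (c : Str n j), c ∈ negF a → g c ∈ negF (f a))
    (h : WfC Ξ) : WfC ξ := by
  intro a ha b hb hab
  have := h (f a) (hsub a ha) (f b) (hsub b hb) (fun e => hab (hf e))
  constructor
  · ext c
    simp only [Set.mem_inter_iff, Set.mem_empty_iff_false, iff_false, not_and]
    intro h1 h2
    exact absurd (Set.ext_iff.mp this.1 (g c) |>.mp ⟨hpos a c h1, hpos b c h2⟩) (by simp)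
  · ext c
    simp only [Set.mem_inter_iff, Set.mem_empty_iff_false, iff_false, not_and]
    intro h1 h2
    exact absurd (Set.ext_iff.mp this.2 (g c) |>.mp ⟨hneg a c h1, hneg b c h2⟩) (by simp)

/-- If `x̄⊖ ∪ x⊙ ∪ x̂⊕` is well-formed then so are `x`, `x̄` and `x̂`
(for `j` odd). -/
theorem cube_wf_of_union_wf (n j : ℕ) (hj : Odd j)
    (x : Set (Str n (j+1))) (xb xh : Set (Str n (j+2)))
    (h : WfC (appM '' xb ∪ appO '' x ∪ appP '' xh)) :
    WfC x ∧ WfC xb ∧ WfC xh := by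
  refine ⟨?_, ?_, ?_⟩
  · exact wf_of_image appO appO appO_inj
      (fun a ha => Or.inl (Or.inr ⟨a, ha, rfl⟩)) posF_appO negF_appO h
  · exact wf_of_image appM appM appM_inj
      (fun a ha => Or.inl (Or.inl ⟨a, ha, rfl⟩)) posF_appM negF_appM h
  · exact wf_of_image appP appP appP_inj
      (fun a ha => Or.inr ⟨a, ha, rfl⟩) posF_appP negF_appP h
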